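/- arXiv:1611.03187 — 2 statements merged into one kernel-verified Lean document; each statement's English description precedes it below -/
import Mathlib

section
/- Any two overlapping bands of a grid polyhedron overlap in at least two grid squares. -/
open scoped Classical

namespace StripFold

/-- A cell of the unit-cube grid (also used for integer grid points and vectors). -/
abbrev Cell : Type := Fin 3 → ℤ

/-- A grid square `(c, i)`: the common face of the unit cubes at cells `c` and `c + eᵢ`. -/
abbrev Sq : Type := Cell × Fin 3

/-- A grid edge `(p, d)`: the unit segment of the cube grid from `p` to `p + e_d`. -/
abbrev GridEdge : Type := Cell × Fin 3

/-- The standard unit vector `eᵢ`. -/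
def unitVec (i : Fin 3) : Cell := fun j => if j = i then 1 else 0

/-- The four grid edges lying on (the boundary of) a grid square. -/
def edgesOf (s : Sq) : Set GridEdge :=
  { e | ∃ j k : Fin 3, j ≠ s.2 ∧ k ≠ s.2 ∧ j ≠ k ∧ e.2 = j ∧
      e.1 s.2 = s.1 s.2 + 1 ∧ e.1 j = s.1 j ∧ (e.1 k = s.1 k ∨ e.1 k = s.1 k + 1) }

/-- The four grid vertices (corners) of a grid square. -/
def vertsOf (s : Sq) : Set Cell :=
  { q | q s.2 = s.1 s.2 + 1 ∧ ∀ j, j ≠ s.2 → (q j = s.1 j ∨ q j = s.1 j + 1) }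

/-- Two grid squares are edge-adjacent: they are distinct and share a grid edge. -/
def edgeAdj (s t : Sq) : Prop := s ≠ t ∧ (edgesOf s ∩ edgesOf t).Nonempty

lemma edgeAdj_symm {s t : Sq} (h : edgeAdj s t) : edgeAdj t s :=
  ⟨h.1.symm, by rw [Set.inter_comm]; exact h.2⟩

/-- The dual graph of a set of grid squares: vertices are the squares, edges join
edge-adjacent squares. -/
def dualGraph (S : Set Sq) : SimpleGraph S where
  Adj a b := edgeAdj a.1 b.1
  symm := ⟨fun _ _ h => edgeAdj_symm h⟩
  loopless := ⟨fun _ h => h.1 rfl⟩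

/-- A grid surface: a finite nonempty set of grid squares whose dual graph is connected. -/
structure IsGridSurface (S : Set Sq) : Prop where
  finite : S.Finite
  nonempty : S.Nonempty
  connected : (dualGraph S).Connected

/-- A milling tour of a grid surface: a closed walk in the dual graph visiting every
vertex at least once.  Its length is `w.length`. -/
def IsMillingTour {S : Set Sq} {v : S} (w : (dualGraph S).Walk v v) : Prop :=
  ∀ u : S, u ∈ w.support

/-- The boundary of a set `C` of unit cubes: the grid squares incident to exactly one
cube of `C`. -/
def boundary (C : Set Cell) : Set Sq :=
  { s | Xor' (s.1 ∈ C) (s.1 + unitVec s.2 ∈ C) }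

/-- All grid edges lying on squares of `P`. -/
def edgesOfSet (P : Set Sq) : Set GridEdge := ⋃ s ∈ P, edgesOf s

/-- All grid vertices lying on squares of `P`. -/
def vertsOfSet (P : Set Sq) : Set Cell := ⋃ s ∈ P, vertsOf s

/-- A grid polyhedron: `P` is the boundary of a finite nonempty set `C` of unit cubes,
`P` is a grid surface, every grid edge lying on a square of `P` lies on exactly two
squares of `P`, and `V - E + F = 2` (stated as `V + F = E + 2`). -/
structure IsGridPolyhedron (C : Set Cell) (P : Set Sq) : Prop where
  finC : C.Finite
  neC : C.Nonempty
  bdry : P = boundary C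
  surface : IsGridSurface P
  edgeTwo : ∀ e : GridEdge, (∃ s ∈ P, e ∈ edgesOf s) →
    { s | s ∈ P ∧ e ∈ edgesOf s }.ncard = 2
  euler : (vertsOfSet P).ncard + P.ncard = (edgesOfSet P).ncard + 2

/-- The squares of `P` that lie in the slab `x_a ∈ [x, x + 1]` and whose normal is
perpendicular to axis `a`. -/
def slabSquares (P : Set Sq) (a : Fin 3) (x : ℤ) : Set Sq :=
  { s | s ∈ P ∧ s.2 ≠ a ∧ s.1 a = x }

/-- `B` is a connected component, under edge-adjacency, of the set `T` of grid squares. -/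
def IsCompOf (B T : Set Sq) : Prop :=
  B.Nonempty ∧ B ⊆ T ∧ (dualGraph B).Connected ∧
    ∀ s ∈ B, ∀ t ∈ T, edgeAdj s t → t ∈ B

/-- A band of a grid polyhedron `P`: an `x`-, `y`-, or `z`-band, i.e. a connected
component under edge-adjacency of the squares of `P` lying in a single slab with
normal perpendicular to the slab axis. -/
def IsBand (P : Set Sq) (B : Set Sq) : Prop :=
  ∃ (a : Fin 3) (x : ℤ), IsCompOf B (slabSquares P a x)

/-- Two bands overlap: they are distinct and some grid square belongs to both. -/
def Overlaps (B B' : Set Sq) : Prop := B ≠ B' ∧ (B ∩ B').Nonempty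

/-- Two bands are adjacent: they do not overlap and some grid square of one is
edge-adjacent to some grid square of the other. -/
def BandAdjacent (B B' : Set Sq) : Prop :=
  ¬ Overlaps B B' ∧ ∃ g ∈ B, ∃ g' ∈ B', edgeAdj g g'

/-- A band cover of `P`: a set of bands of `P` covering every grid square of `P`. -/
def IsBandCover (P : Set Sq) (S : Set (Set Sq)) : Prop :=
  (∀ B ∈ S, IsBand P B) ∧ ∀ g ∈ P, ∃ B ∈ S, g ∈ B

/-- The band graph `G_P`: one vertex per band of `P`, an edge between two bands iff
they overlap. -/
def bandGraph (P : Set Sq) : SimpleGraph {B : Set Sq // IsBand P B} where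
  Adj B B' := Overlaps B.1 B'.1
  symm := ⟨fun _ _ h => ⟨h.1.symm, by rw [Set.inter_comm]; exact h.2⟩⟩
  loopless := ⟨fun _ h => h.1 rfl⟩

section Walks

variable {S : Set Sq} {v : S}

/-- The index of the previous position of a closed walk, cyclically. -/
def prevIdx (w : (dualGraph S).Walk v v) (k : ℕ) : ℕ := (k + w.length - 1) % w.length

/-- The index of the next position of a closed walk, cyclically. -/
def nextIdx (w : (dualGraph S).Walk v v) (k : ℕ) : ℕ := (k + 1) % w.length

/-- The grid square visited at position `k` of the walk. -/
def squareAt (w : (dualGraph S).Walk v v) (k : ℕ) : Sq := (w.getVert k).1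

/-- `e` is a side shared by grid squares `s` and `t`. -/
def sharedSide (s t : Sq) (e : GridEdge) : Prop := e ∈ edgesOf s ∧ e ∈ edgesOf t

/-- `e` is the side through which the visit at position `k` enters its grid square. -/
def EnterSide (w : (dualGraph S).Walk v v) (k : ℕ) (e : GridEdge) : Prop :=
  sharedSide (squareAt w (prevIdx w k)) (squareAt w k) e

/-- `e` is the side through which the visit at position `k` exits its grid square. -/
def ExitSide (w : (dualGraph S).Walk v v) (k : ℕ) (e : GridEdge) : Prop :=
  sharedSide (squareAt w k) (squareAt w (nextIdx w k)) e

/-- The visit at position `k` is straight: it enters and exits through opposite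
(distinct parallel) sides. -/
def StraightVisit (w : (dualGraph S).Walk v v) (k : ℕ) : Prop :=
  ∃ e₁ e₂, EnterSide w k e₁ ∧ ExitSide w k e₂ ∧ e₁ ≠ e₂ ∧ e₁.2 = e₂.2

/-- The visit at position `k` is a turn: it enters and exits through incident
(non-parallel) sides. -/
def TurnVisit (w : (dualGraph S).Walk v v) (k : ℕ) : Prop :=
  ∃ e₁ e₂, EnterSide w k e₁ ∧ ExitSide w k e₂ ∧ e₁.2 ≠ e₂.2

/-- The visit at position `k` is a U-turn: it enters and exits through the same side. -/
def UTurnVisit (w : (dualGraph S).Walk v v) (k : ℕ) : Prop :=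
  ∃ e, EnterSide w k e ∧ ExitSide w k e

/-- The number of turns of a closed walk: the number of visits that are turns or
U-turns. -/
noncomputable def turnCount (w : (dualGraph S).Walk v v) : ℕ :=
  {k | k < w.length ∧ (TurnVisit w k ∨ UTurnVisit w k)}.ncard

/-- The set of positions at which the walk visits the grid square `g`. -/
def visitsOf (w : (dualGraph S).Walk v v) (g : Sq) : Set ℕ :=
  {k | k < w.length ∧ squareAt w k = g}

/-- `g` is visited exactly at the two distinct positions `k₁` and `k₂`. -/
def JunctionAt (w : (dualGraph S).Walk v v) (g : Sq) (k₁ k₂ : ℕ) : Prop :=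
  k₁ ≠ k₂ ∧ visitsOf w g = {k₁, k₂}

/-- The four sides used by the two visits at positions `k₁, k₂` are `e₁, e₂, e₃, e₄`,
pairwise distinct (hence each of the four sides of the square is used exactly once). -/
def FourSides (w : (dualGraph S).Walk v v) (k₁ k₂ : ℕ) (e₁ e₂ e₃ e₄ : GridEdge) : Prop :=
  EnterSide w k₁ e₁ ∧ ExitSide w k₁ e₂ ∧ EnterSide w k₂ e₃ ∧ ExitSide w k₂ e₄ ∧
    e₁ ≠ e₂ ∧ e₁ ≠ e₃ ∧ e₁ ≠ e₄ ∧ e₂ ≠ e₃ ∧ e₂ ≠ e₄ ∧ e₃ ≠ e₄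

/-- `g` is a straight junction: visited exactly twice, each of its four sides used
exactly once, and both visits are straight. -/
def IsStraightJunction (w : (dualGraph S).Walk v v) (g : Sq) : Prop :=
  ∃ k₁ k₂, JunctionAt w g k₁ k₂ ∧ ∃ e₁ e₂ e₃ e₄, FourSides w k₁ k₂ e₁ e₂ e₃ e₄ ∧
    e₁.2 = e₂.2 ∧ e₃.2 = e₄.2

/-- `g` is a turn junction: visited exactly twice, each of its four sides used
exactly once, and both visits are turns. -/
def IsTurnJunction (w : (dualGraph S).Walk v v) (g : Sq) : Prop :=
  ∃ k₁ k₂, JunctionAt w g k₁ k₂ ∧ ∃ e₁ e₂ e₃ e₄, FourSides w k₁ k₂ e₁ e₂ e₃ e₄ ∧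
    e₁.2 ≠ e₂.2 ∧ e₃.2 ≠ e₄.2

end Walks

/-- The third coordinate axis, distinct from distinct axes `i` and `d`. -/
def thirdIdx (i d : Fin 3) : Fin 3 := ⟨(3 - (i.val + d.val)) % 3, Nat.mod_lt _ (by norm_num)⟩

/-- Cross product of integer vectors in 3-space. -/
def cross3 (u v : Cell) : Cell := fun i => u (i + 1) * v (i + 2) - u (i + 2) * v (i + 1)

/-- Dot product of integer vectors in 3-space. -/
def dot3 (u v : Cell) : ℤ := ∑ i : Fin 3, u i * v i

/-- The outward unit normal of the grid square `s` on the boundary of the cube set `C`: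
it points out of `C`. -/
noncomputable def outwardNormal (C : Set Cell) (s : Sq) : Cell :=
  if s.1 ∈ C then unitVec s.2 else -unitVec s.2

/-- The unit direction of travel when entering the grid square `g` through its side `e`:
in-plane, perpendicular to `e`, pointing from `e` into `g`. -/
def enterDir (g : Sq) (e : GridEdge) : Cell :=
  if e.1 (thirdIdx g.2 e.2) = g.1 (thirdIdx g.2 e.2) then unitVec (thirdIdx g.2 e.2)
  else -unitVec (thirdIdx g.2 e.2)

/-- The unit direction of travel when exiting the grid square `g` through its side `e`. -/
def exitDir (g : Sq) (e : GridEdge) : Cell := -enterDir g e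

section Turns

variable {S : Set Sq} {v : S}

/-- The visit at position `k` is a left turn: it enters with direction `u` and exits
with direction `v` through incident sides, with `(u × v) · n > 0` for the outward
normal `n`. -/
def IsLeftTurnVisit (C : Set Cell) (w : (dualGraph S).Walk v v) (k : ℕ) : Prop :=
  ∃ e₁ e₂, EnterSide w k e₁ ∧ ExitSide w k e₂ ∧ e₁.2 ≠ e₂.2 ∧
    0 < dot3 (cross3 (enterDir (squareAt w k) e₁) (exitDir (squareAt w k) e₂))
        (outwardNormal C (squareAt w k))

/-- The visit at position `k` is a right turn: `(u × v) · n < 0`. -/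
def IsRightTurnVisit (C : Set Cell) (w : (dualGraph S).Walk v v) (k : ℕ) : Prop :=
  ∃ e₁ e₂, EnterSide w k e₁ ∧ ExitSide w k e₂ ∧ e₁.2 ≠ e₂.2 ∧
    dot3 (cross3 (enterDir (squareAt w k) e₁) (exitDir (squareAt w k) e₂))
        (outwardNormal C (squareAt w k)) < 0

end Turns

/-- `k₁` and `k₂` are cyclically consecutive elements of the set `T` of positions:
no element of `T` lies strictly between them in cyclic order. -/
def CyclicallyConsecutive (T : Set ℕ) (k₁ k₂ : ℕ) : Prop :=
  k₁ ∈ T ∧ k₂ ∈ T ∧ k₁ ≠ k₂ ∧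
    ∀ j ∈ T, j ≠ k₁ → j ≠ k₂ →
      ¬ ((k₁ < j ∧ j < k₂) ∨ (k₂ < k₁ ∧ (k₁ < j ∨ j < k₂)))

/-!
Let `B₁` be an `a`-band and `B₂` a `b`-band with a common square; then `a ≠ b`, because
two components of one slab that meet coincide. The rim of `B₂` (the edges of its squares in
the plane `x_b = y` bounding its slab from below) is a mod-2 cycle in the edge graph of `P`.
The rungs of `B₁` (the edges of its squares parallel to the axis `a`) form a dual cycle:
every square of `P` has zero or two of them among its sides. On a closed surface of Euler
characteristic `2` a cycle and a dual cycle meet in an even number of edges, because the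
cycle bounds a set of faces, i.e. `H₁(P; 𝔽₂) = 0`; this follows from counting ranks in the
cellular chain complex, whose boundary map on faces has kernel spanned by the all-ones chain
(the dual graph is connected) and whose boundary map on edges has corank one (the
1-skeleton is connected). A rung of `B₁` lies on the rim of `B₂` exactly when it is the rim
edge of a square of `B₁ ∩ B₂`, so `B₁ ∩ B₂` has even, nonzero size.
-/

section Axes

lemma thirdIdx_ne : ∀ i d : Fin 3, d ≠ i → thirdIdx i d ≠ i ∧ thirdIdx i d ≠ d := by decide

lemma eq_thirdIdx : ∀ i d k : Fin 3, d ≠ i → k ≠ i → k ≠ d → k = thirdIdx i d := by decide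

lemma eq_or_eq_or_eq_thirdIdx : ∀ i d m : Fin 3, d ≠ i → m = i ∨ m = d ∨ m = thirdIdx i d := by
  decide

lemma thirdIdx_thirdIdx : ∀ i d : Fin 3, d ≠ i → thirdIdx i (thirdIdx i d) = d := by decide

lemma thirdIdx_left_inj : ∀ i i' d : Fin 3, i ≠ d → i' ≠ d → thirdIdx i d = thirdIdx i' d →
    i = i' := by
  decide

def tangentAxis₁ (i : Fin 3) : Fin 3 := if i = 0 then 1 else 0

def tangentAxis₂ (i : Fin 3) : Fin 3 := if i = 2 then 1 else 2

lemma tangentAxis_spec : ∀ i : Fin 3, tangentAxis₁ i ≠ i ∧ tangentAxis₂ i ≠ i ∧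
    tangentAxis₁ i ≠ tangentAxis₂ i ∧ thirdIdx i (tangentAxis₁ i) = tangentAxis₂ i ∧
    thirdIdx i (tangentAxis₂ i) = tangentAxis₁ i := by
  decide

lemma eq_or_eq_tangentAxis : ∀ i m : Fin 3, m = i ∨ m = tangentAxis₁ i ∨ m = tangentAxis₂ i := by
  decide

@[simp] lemma unitVec_self (i : Fin 3) : unitVec i i = 1 := by simp [unitVec]

lemma unitVec_of_ne {i j : Fin 3} (h : j ≠ i) : unitVec i j = 0 := by simp [unitVec, h]

end Axes

section Square

lemma mem_edgesOf {s : Sq} {e : GridEdge} :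
    e ∈ edgesOf s ↔ e.2 ≠ s.2 ∧ e.1 s.2 = s.1 s.2 + 1 ∧ e.1 e.2 = s.1 e.2 ∧
      (e.1 (thirdIdx s.2 e.2) = s.1 (thirdIdx s.2 e.2) ∨
        e.1 (thirdIdx s.2 e.2) = s.1 (thirdIdx s.2 e.2) + 1) := by
  constructor
  · rintro ⟨j, k, hj, hk, hjk, rfl, h⟩
    rw [← eq_thirdIdx s.2 _ k hj hk hjk.symm]
    exact ⟨hj, h⟩
  · rintro ⟨h0, h⟩
    obtain ⟨ht1, ht2⟩ := thirdIdx_ne s.2 e.2 h0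
    exact ⟨e.2, thirdIdx s.2 e.2, h0, ht1, ht2.symm, rfl, h⟩

lemma ne_normal_of_mem_edgesOf {s : Sq} {e : GridEdge} (he : e ∈ edgesOf s) : e.2 ≠ s.2 :=
  (mem_edgesOf.mp he).1

lemma apply_dir_of_mem_edgesOf {s : Sq} {e : GridEdge} (he : e ∈ edgesOf s) :
    e.1 e.2 = s.1 e.2 :=
  (mem_edgesOf.mp he).2.2.1

/-- The side of the square `s` parallel to the axis `d`; `δ` selects which of the two. -/
def side (s : Sq) (d : Fin 3) (δ : Bool) : GridEdge :=
  (s.1 + unitVec s.2 + (if δ then unitVec (thirdIdx s.2 d) else 0), d)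

lemma side_mem {s : Sq} {d : Fin 3} (hd : d ≠ s.2) (δ : Bool) : side s d δ ∈ edgesOf s := by
  obtain ⟨ht1, ht2⟩ := thirdIdx_ne s.2 d hd
  rw [mem_edgesOf]
  refine ⟨hd, ?_, ?_, ?_⟩ <;> cases δ <;>
    simp [side, unitVec_of_ne ht1, unitVec_of_ne ht1.symm, unitVec_of_ne hd,
      unitVec_of_ne ht2.symm]

lemma side_false_ne_true {s : Sq} {d : Fin 3} (hd : d ≠ s.2) :
    side s d false ≠ side s d true := by
  intro h
  have := congrFun (congrArg Prod.fst h) (thirdIdx s.2 d)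
  simp [side, unitVec_of_ne (thirdIdx_ne s.2 d hd).1] at this

lemma eq_side_of_mem_edgesOf {s : Sq} {e : GridEdge} (he : e ∈ edgesOf s) :
    e = side s e.2 false ∨ e = side s e.2 true := by
  obtain ⟨h0, h1, h2, h3⟩ := mem_edgesOf.mp he
  obtain ⟨ht1, ht2⟩ := thirdIdx_ne s.2 e.2 h0
  have key : ∀ δ : Bool,
      e.1 (thirdIdx s.2 e.2) = s.1 (thirdIdx s.2 e.2) + (if δ then 1 else 0) →
      e = side s e.2 δ := by
    intro δ hδ
    refine Prod.ext (funext fun m => ?_) rfl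
    rcases eq_or_eq_or_eq_thirdIdx s.2 e.2 m h0 with rfl | rfl | rfl <;> cases δ <;>
      simp_all [side, unitVec_of_ne ht1, unitVec_of_ne ht1.symm, unitVec_of_ne h0,
        unitVec_of_ne ht2.symm]
  rcases h3 with h3 | h3
  exacts [Or.inl (key false (by simpa using h3)), Or.inr (key true (by simpa using h3))]

lemma ncard_edgesOf_inter_dir {s : Sq} {d : Fin 3} (hd : d ≠ s.2) :
    (edgesOf s ∩ {e | e.2 = d}).ncard = 2 := by
  have : edgesOf s ∩ {e | e.2 = d} = {side s d false, side s d true} := by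
    ext e
    refine ⟨fun ⟨he, hed⟩ => ?_, ?_⟩
    · subst hed
      exact eq_side_of_mem_edgesOf he
    · rintro (rfl | rfl)
      exacts [⟨side_mem hd _, rfl⟩, ⟨side_mem hd _, rfl⟩]
  rw [this, Set.ncard_pair (side_false_ne_true hd)]

/-- The corner of `s` displaced by `δ₁` along `tangentAxis₁ s.2` and by `δ₂` along
`tangentAxis₂ s.2`. -/
def corner (s : Sq) (δ₁ δ₂ : Bool) : Cell :=
  s.1 + unitVec s.2 + (if δ₁ then unitVec (tangentAxis₁ s.2) else 0) +
    (if δ₂ then unitVec (tangentAxis₂ s.2) else 0)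

lemma corner_apply_normal (s : Sq) (δ₁ δ₂ : Bool) : corner s δ₁ δ₂ s.2 = s.1 s.2 + 1 := by
  obtain ⟨h1, h2, -⟩ := tangentAxis_spec s.2
  cases δ₁ <;> cases δ₂ <;> simp [corner, unitVec_of_ne h1.symm, unitVec_of_ne h2.symm]

lemma corner_apply_tangentAxis₁ (s : Sq) (δ₁ δ₂ : Bool) :
    corner s δ₁ δ₂ (tangentAxis₁ s.2) = s.1 (tangentAxis₁ s.2) + (if δ₁ then 1 else 0) := by
  obtain ⟨h1, -, h3, -⟩ := tangentAxis_spec s.2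
  cases δ₁ <;> cases δ₂ <;> simp [corner, unitVec_of_ne h1, unitVec_of_ne h3]

lemma corner_apply_tangentAxis₂ (s : Sq) (δ₁ δ₂ : Bool) :
    corner s δ₁ δ₂ (tangentAxis₂ s.2) = s.1 (tangentAxis₂ s.2) + (if δ₂ then 1 else 0) := by
  obtain ⟨-, h2, h3, -⟩ := tangentAxis_spec s.2
  cases δ₁ <;> cases δ₂ <;> simp [corner, unitVec_of_ne h2, unitVec_of_ne h3.symm]

lemma mem_vertsOf {s : Sq} {q : Cell} : q ∈ vertsOf s ↔ ∃ δ₁ δ₂ : Bool, q = corner s δ₁ δ₂ := by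
  obtain ⟨h1, h2, -⟩ := tangentAxis_spec s.2
  constructor
  · rintro ⟨hn, ht⟩
    refine ⟨decide (q (tangentAxis₁ s.2) = s.1 (tangentAxis₁ s.2) + 1),
      decide (q (tangentAxis₂ s.2) = s.1 (tangentAxis₂ s.2) + 1), funext fun m => ?_⟩
    rcases eq_or_eq_tangentAxis s.2 m with rfl | rfl | rfl
    · rw [corner_apply_normal, hn]
    · rw [corner_apply_tangentAxis₁]
      rcases ht _ h1 with h | h <;> simp [h]
    · rw [corner_apply_tangentAxis₂]
      rcases ht _ h2 with h | h <;> simp [h]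
  · rintro ⟨δ₁, δ₂, rfl⟩
    refine ⟨corner_apply_normal s δ₁ δ₂, fun j hj => ?_⟩
    rcases eq_or_eq_tangentAxis s.2 j with rfl | rfl | rfl
    · exact absurd rfl hj
    · rw [corner_apply_tangentAxis₁]; cases δ₁ <;> simp
    · rw [corner_apply_tangentAxis₂]; cases δ₂ <;> simp

lemma corner_inj {s : Sq} {δ₁ δ₂ ε₁ ε₂ : Bool} (h : corner s δ₁ δ₂ = corner s ε₁ ε₂) :
    δ₁ = ε₁ ∧ δ₂ = ε₂ := by
  have h1 := congrFun h (tangentAxis₁ s.2)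
  have h2 := congrFun h (tangentAxis₂ s.2)
  rw [corner_apply_tangentAxis₁, corner_apply_tangentAxis₁] at h1
  rw [corner_apply_tangentAxis₂, corner_apply_tangentAxis₂] at h2
  constructor
  · cases δ₁ <;> cases ε₁ <;> simp_all
  · cases δ₂ <;> cases ε₂ <;> simp_all

def ends (e : GridEdge) : Set Cell := {e.1, e.1 + unitVec e.2}

def edgesAt (v : Cell) : Set GridEdge := {e | v ∈ ends e}

def IsEdgeCycle (ρ : Set GridEdge) : Prop := ∀ v, Even (edgesAt v ∩ ρ).ncard

lemma self_ne_add_unitVec (p : Cell) (d : Fin 3) : p ≠ p + unitVec d := by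
  intro h
  simpa using congrFun h d

lemma ends_side_tangentAxis₁ (s : Sq) (δ : Bool) :
    ends (side s (tangentAxis₁ s.2) δ) = {corner s false δ, corner s true δ} := by
  obtain ⟨-, -, -, h4, -⟩ := tangentAxis_spec s.2
  simp only [ends, side, h4, corner]
  cases δ <;> simp [add_right_comm]

lemma ends_side_tangentAxis₂ (s : Sq) (δ : Bool) :
    ends (side s (tangentAxis₂ s.2) δ) = {corner s δ false, corner s δ true} := by
  obtain ⟨-, -, -, -, h5⟩ := tangentAxis_spec s.2
  simp only [ends, side, h5, corner]
  cases δ <;> simp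

lemma corner_mem_ends_side_tangentAxis₁ {s : Sq} {δ₁ δ₂ δ : Bool} :
    corner s δ₁ δ₂ ∈ ends (side s (tangentAxis₁ s.2) δ) ↔ δ = δ₂ := by
  rw [ends_side_tangentAxis₁]
  constructor
  · rintro (h | h) <;> exact (corner_inj h).2.symm
  · rintro rfl
    cases δ₁ <;> simp

lemma corner_mem_ends_side_tangentAxis₂ {s : Sq} {δ₁ δ₂ δ : Bool} :
    corner s δ₁ δ₂ ∈ ends (side s (tangentAxis₂ s.2) δ) ↔ δ = δ₁ := by
  rw [ends_side_tangentAxis₂]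
  constructor
  · rintro (h | h) <;> exact (corner_inj h).1.symm
  · rintro rfl
    cases δ₂ <;> simp

lemma edgesOf_eq (s : Sq) : edgesOf s =
    {side s (tangentAxis₁ s.2) false, side s (tangentAxis₁ s.2) true,
      side s (tangentAxis₂ s.2) false, side s (tangentAxis₂ s.2) true} := by
  obtain ⟨h1, h2, -⟩ := tangentAxis_spec s.2
  ext e
  constructor
  · intro he
    have hd := ne_normal_of_mem_edgesOf he
    rcases eq_side_of_mem_edgesOf he with h | h <;>
      rcases eq_or_eq_tangentAxis s.2 e.2 with hm | hm | hm <;>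
      first | exact absurd hm hd | (rw [hm] at h; simp [h])
  · rintro (rfl | rfl | rfl | rfl)
    exacts [side_mem h1 _, side_mem h1 _, side_mem h2 _, side_mem h2 _]

lemma edgesOf_finite (s : Sq) : (edgesOf s).Finite := by
  rw [edgesOf_eq]
  exact Set.toFinite _

lemma vertsOf_finite (s : Sq) : (vertsOf s).Finite := by
  have : vertsOf s = Set.range (fun δ : Bool × Bool => corner s δ.1 δ.2) := by
    ext q
    simp [mem_vertsOf, eq_comm]
  rw [this]
  exact Set.finite_range _

lemma ends_subset_vertsOf {s : Sq} {e : GridEdge} (he : e ∈ edgesOf s) : ends e ⊆ vertsOf s := by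
  rw [edgesOf_eq] at he
  rcases he with rfl | rfl | rfl | rfl <;>
    simp only [ends_side_tangentAxis₁, ends_side_tangentAxis₂] <;>
    rintro q (rfl | rfl) <;> exact mem_vertsOf.mpr ⟨_, _, rfl⟩

lemma edgesAt_corner_inter_edgesOf (s : Sq) (δ₁ δ₂ : Bool) :
    edgesAt (corner s δ₁ δ₂) ∩ edgesOf s =
      {side s (tangentAxis₁ s.2) δ₂, side s (tangentAxis₂ s.2) δ₁} := by
  obtain ⟨h1, h2, -⟩ := tangentAxis_spec s.2
  ext e
  constructor
  · rintro ⟨hv, he⟩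
    rw [edgesOf_eq] at he
    rcases he with rfl | rfl | rfl | rfl <;>
      first
      | rw [corner_mem_ends_side_tangentAxis₁.mp hv]; simp
      | rw [corner_mem_ends_side_tangentAxis₂.mp hv]; simp
  · rintro (rfl | rfl)
    exacts [⟨corner_mem_ends_side_tangentAxis₁.mpr rfl, side_mem h1 _⟩,
      ⟨corner_mem_ends_side_tangentAxis₂.mpr rfl, side_mem h2 _⟩]

lemma isEdgeCycle_edgesOf (s : Sq) : IsEdgeCycle (edgesOf s) := by
  intro v
  by_cases hv : v ∈ vertsOf s
  · obtain ⟨δ₁, δ₂, rfl⟩ := mem_vertsOf.mp hv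
    rw [edgesAt_corner_inter_edgesOf, Set.ncard_pair fun h =>
      (tangentAxis_spec s.2).2.2.1 (congrArg Prod.snd h)]
    exact even_two
  · have : edgesAt v ∩ edgesOf s = ∅ :=
      Set.eq_empty_of_forall_notMem fun e he => hv (ends_subset_vertsOf he.2 he.1)
    rw [this, Set.ncard_empty]
    exact Even.zero

end Square

section Components

variable {S B B' T : Set Sq}

lemma mem_of_walk (hST : S ⊆ T) (hB : ∀ s ∈ B, ∀ t ∈ T, edgeAdj s t → t ∈ B) {u w : S}
    (p : (dualGraph S).Walk u w) (hu : u.1 ∈ B) : w.1 ∈ B := by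
  induction p with
  | nil => exact hu
  | @cons _ v' _ h _ ih => exact ih (hB _ hu _ (hST v'.2) h)

lemma IsCompOf.subset (h : IsCompOf B T) : B ⊆ T := h.2.1

lemma IsCompOf.mem_of_edgeAdj (h : IsCompOf B T) {s t : Sq} (hs : s ∈ B) (ht : t ∈ T)
    (hst : edgeAdj s t) : t ∈ B :=
  h.2.2.2 s hs t ht hst

lemma IsCompOf.eq_of_mem (h : IsCompOf B T) (h' : IsCompOf B' T) {s : Sq} (hs : s ∈ B)
    (hs' : s ∈ B') : B = B' := by
  obtain ⟨-, hBT, hconn, hcl⟩ := h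
  obtain ⟨-, hBT', hconn', hcl'⟩ := h'
  refine Set.Subset.antisymm (fun t ht => ?_) (fun t ht => ?_)
  · obtain ⟨p⟩ := hconn.preconnected ⟨s, hs⟩ ⟨t, ht⟩
    exact mem_of_walk hBT hcl' p hs'
  · obtain ⟨p⟩ := hconn'.preconnected ⟨s, hs'⟩ ⟨t, ht⟩
    exact mem_of_walk hBT' hcl p hs

end Components

def facesOf (P : Set Sq) (e : GridEdge) : Set Sq := {s | s ∈ P ∧ e ∈ edgesOf s}

lemma facesOf_eq_pair {P : Set Sq}
    (hedge : ∀ e, (∃ s ∈ P, e ∈ edgesOf s) → (facesOf P e).ncard = 2) {e : GridEdge}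
    {s t : Sq} (hs : s ∈ facesOf P e) (ht : t ∈ facesOf P e) (hst : s ≠ t) :
    facesOf P e = {s, t} := by
  have h2 := hedge e ⟨s, hs⟩
  refine (Set.eq_of_subset_of_ncard_le ?_ ?_ (Set.finite_of_ncard_pos (by omega))).symm
  · rintro u (rfl | rfl) <;> assumption
  · rw [h2, Set.ncard_pair hst]

lemma mem_edgesOfSet {P : Set Sq} {e : GridEdge} : e ∈ edgesOfSet P ↔ ∃ s ∈ P, e ∈ edgesOf s := by
  simp [edgesOfSet]

lemma mem_vertsOfSet {P : Set Sq} {v : Cell} : v ∈ vertsOfSet P ↔ ∃ s ∈ P, v ∈ vertsOf s := by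
  simp [vertsOfSet]

lemma edgesOfSet_finite {P : Set Sq} (h : P.Finite) : (edgesOfSet P).Finite :=
  h.biUnion fun s _ => edgesOf_finite s

lemma vertsOfSet_finite {P : Set Sq} (h : P.Finite) : (vertsOfSet P).Finite :=
  h.biUnion fun s _ => vertsOf_finite s

lemma edgesOf_subset_edgesOfSet {P : Set Sq} {s : Sq} (hs : s ∈ P) : edgesOf s ⊆ edgesOfSet P :=
  fun _ he => mem_edgesOfSet.mpr ⟨s, hs, he⟩

open Module LinearMap in
theorem range_eq_ker_of_finrank {K U W X : Type*} [Field K] [AddCommGroup U] [Module K U]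
    [FiniteDimensional K U] [AddCommGroup W] [Module K W] [FiniteDimensional K W]
    [AddCommGroup X] [Module K X] [FiniteDimensional K X]
    (f : U →ₗ[K] W) (g : W →ₗ[K] X) (hgf : g ∘ₗ f = 0) (c : U) (hf : ker f ≤ K ∙ c)
    (φ : X →ₗ[K] K) (hg : ker φ ≤ range g)
    (hdim : finrank K X + finrank K U = finrank K W + 2) :
    range f = ker g := by
  have hle : range f ≤ ker g := LinearMap.range_le_ker_iff.mpr hgf
  have hkf : finrank K (ker f) ≤ 1 :=
    (Submodule.finrank_mono hf).trans ((finrank_span_le_card ({c} : Set U)).trans (by simp))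
  have hrφ : finrank K (range φ) ≤ 1 := (Submodule.finrank_le _).trans (finrank_self K).le
  have hf_rank := finrank_range_add_finrank_ker f
  have hg_rank := finrank_range_add_finrank_ker g
  have hφ_rank := finrank_range_add_finrank_ker φ
  have hkφ := Submodule.finrank_mono hg
  -- `dim ker g = dim W - rank g ≤ dim W - dim X + 1 = dim U - 1 ≤ rank f`
  exact Submodule.eq_of_le_of_finrank_le hle (by omega)

section Chains

open Matrix

variable {P : Set Sq}

noncomputable def edgeChain (P : Set Sq) (ρ : Set GridEdge) : edgesOfSet P → ZMod 2 :=
  fun e => if e.1 ∈ ρ then 1 else 0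

noncomputable def vertexChain (P : Set Sq) (c : Cell) : vertsOfSet P → ZMod 2 :=
  fun v => if v.1 = c then 1 else 0

noncomputable def faceBoundary (P : Set Sq) : Matrix (edgesOfSet P) P (ZMod 2) :=
  fun e s => edgeChain P (edgesOf s.1) e

noncomputable def edgeBoundary (P : Set Sq) : Matrix (vertsOfSet P) (edgesOfSet P) (ZMod 2) :=
  fun v => edgeChain P (edgesAt v.1)

lemma edgeChain_dotProduct [Fintype (edgesOfSet P)] {ρ σ : Set GridEdge}
    (h : ρ ∩ σ ⊆ edgesOfSet P) : edgeChain P ρ ⬝ᵥ edgeChain P σ = ((ρ ∩ σ).ncard : ZMod 2) := by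
  have hset : ρ ∩ σ = Subtype.val ''
      ((Finset.univ.filter fun e : edgesOfSet P => e.1 ∈ ρ ∩ σ : Finset _) : Set (edgesOfSet P)) := by
    ext e
    simp only [Finset.coe_filter, Finset.mem_univ, true_and, Set.mem_image,
      Subtype.exists, exists_and_right, exists_eq_right]
    exact ⟨fun he => ⟨h he, he⟩, fun ⟨_, he⟩ => he⟩
  rw [hset, Set.ncard_image_of_injective _ Subtype.val_injective, Set.ncard_coe_finset,
    ← Finset.sum_boole]
  refine Finset.sum_congr rfl fun e _ => ?_
  simp only [edgeChain, Set.mem_inter_iff, ite_zero_mul_ite_zero, mul_one]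

lemma edgeBoundary_mulVec_edgeChain [Fintype (edgesOfSet P)] {ρ : Set GridEdge}
    (hρP : ρ ⊆ edgesOfSet P) (hρ : IsEdgeCycle ρ) : edgeBoundary P *ᵥ edgeChain P ρ = 0 :=
  funext fun v => (edgeChain_dotProduct (Set.inter_subset_right.trans hρP)).trans
    (ZMod.natCast_eq_zero_iff_even.mpr (hρ v.1))

lemma edgeBoundary_mul_faceBoundary [Fintype (edgesOfSet P)] :
    edgeBoundary P * faceBoundary P = 0 := by
  ext v s
  exact congrFun (edgeBoundary_mulVec_edgeChain (edgesOf_subset_edgesOfSet s.2)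
    (isEdgeCycle_edgesOf s.1)) v

lemma faceBoundary_mulVec_apply [Fintype P] (x : P → ZMod 2) {e : edgesOfSet P} {s t : Sq}
    (hs : s ∈ P) (ht : t ∈ P) (hst : s ≠ t) (he : facesOf P e.1 = {s, t}) :
    (faceBoundary P *ᵥ x) e = x ⟨s, hs⟩ + x ⟨t, ht⟩ := by
  have hfilter : Finset.univ.filter (fun u : P => e.1 ∈ edgesOf u.1) = {⟨s, hs⟩, ⟨t, ht⟩} := by
    ext u
    have : u.1 ∈ facesOf P e.1 ↔ e.1 ∈ edgesOf u.1 := and_iff_right u.2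
    simp [← this, he, Subtype.ext_iff]
  simp only [mulVec, dotProduct, faceBoundary, edgeChain, ite_mul, one_mul, zero_mul]
  rw [← Finset.sum_filter, hfilter, Finset.sum_pair (by simpa [Subtype.ext_iff] using hst)]

lemma ker_faceBoundary_le_span_one [Fintype P] (hconn : (dualGraph P).Connected)
    (hedge : ∀ e, (∃ s ∈ P, e ∈ edgesOf s) → (facesOf P e).ncard = 2) :
    LinearMap.ker (faceBoundary P).mulVecLin ≤ (ZMod 2) ∙ (1 : P → ZMod 2) := by
  intro x hx
  have hx : faceBoundary P *ᵥ x = 0 := hx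
  have hadj : ∀ s t : P, (dualGraph P).Adj s t → x s = x t := by
    rintro s t ⟨hst, e, hes, het⟩
    have heP : e ∈ edgesOfSet P := edgesOf_subset_edgesOfSet s.2 hes
    have := faceBoundary_mulVec_apply x (e := ⟨e, heP⟩) s.2 t.2 hst
      (facesOf_eq_pair hedge ⟨s.2, hes⟩ ⟨t.2, het⟩ hst)
    rwa [hx, Pi.zero_apply, eq_comm, CharTwo.add_eq_zero] at this
  have hwalk : ∀ {s t : P}, (dualGraph P).Walk s t → x s = x t := by
    intro s t p
    induction p with
    | nil => rfl
    | cons h _ ih => exact (hadj _ _ h).trans ih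
  obtain ⟨s₀⟩ := hconn.nonempty
  refine Submodule.mem_span_singleton.mpr ⟨x s₀, funext fun s => ?_⟩
  obtain ⟨p⟩ := hconn.preconnected s₀ s
  simp [hwalk p]

def Joined (P : Set Sq) [Fintype (edgesOfSet P)] (u w : Cell) : Prop :=
  vertexChain P u + vertexChain P w ∈ LinearMap.range (edgeBoundary P).mulVecLin

section Joined

variable [Fintype (edgesOfSet P)]

lemma Joined.refl (u : Cell) : Joined P u u := by
  rw [Joined, show vertexChain P u + vertexChain P u = 0 from
    funext fun _ => CharTwo.add_self_eq_zero _]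
  exact zero_mem _

lemma Joined.symm {u w : Cell} (h : Joined P u w) : Joined P w u := by
  rwa [Joined, add_comm]

lemma Joined.trans {u v w : Cell} (h₁ : Joined P u v) (h₂ : Joined P v w) : Joined P u w := by
  have : vertexChain P u + vertexChain P w =
      vertexChain P u + vertexChain P v + (vertexChain P v + vertexChain P w) :=
    funext fun c => by simp [← add_assoc, CharTwo.add_cancel_right]
  rw [Joined, this]
  exact add_mem h₁ h₂

lemma joined_ends {e : GridEdge} (he : e ∈ edgesOfSet P) : Joined P e.1 (e.1 + unitVec e.2) := by
  refine ⟨Pi.single ⟨e, he⟩ 1, funext fun v => ?_⟩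
  have hne := self_ne_add_unitVec e.1 e.2
  simp only [Matrix.mulVecLin_apply, mulVec_single_one, col_apply, edgeBoundary, edgeChain,
    edgesAt, Set.mem_ofPred_eq, ends, Set.mem_insert_iff, Set.mem_singleton_iff, Pi.add_apply,
    vertexChain]
  by_cases h₁ : v.1 = e.1 <;> by_cases h₂ : v.1 = e.1 + unitVec e.2 <;> simp_all

lemma joined_of_mem_ends {e : GridEdge} (he : e ∈ edgesOfSet P) {u w : Cell} (hu : u ∈ ends e)
    (hw : w ∈ ends e) : Joined P u w := by
  rcases hu with rfl | rfl <;> rcases hw with rfl | rfl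
  exacts [.refl _, joined_ends he, (joined_ends he).symm, .refl _]

lemma joined_of_mem_vertsOf {s : Sq} (hs : s ∈ P) {u w : Cell} (hu : u ∈ vertsOf s)
    (hw : w ∈ vertsOf s) : Joined P u w := by
  obtain ⟨h1, h2, -⟩ := tangentAxis_spec s.2
  obtain ⟨δ₁, δ₂, rfl⟩ := mem_vertsOf.mp hu
  obtain ⟨ε₁, ε₂, rfl⟩ := mem_vertsOf.mp hw
  have hedge {d : Fin 3} (hd : d ≠ s.2) (δ : Bool) : side s d δ ∈ edgesOfSet P :=
    edgesOf_subset_edgesOfSet hs (side_mem hd δ)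
  exact (joined_of_mem_ends (hedge h1 δ₂) (corner_mem_ends_side_tangentAxis₁.mpr rfl)
      (corner_mem_ends_side_tangentAxis₁.mpr rfl)).trans
    (joined_of_mem_ends (hedge h2 ε₁) (corner_mem_ends_side_tangentAxis₂.mpr rfl)
      (corner_mem_ends_side_tangentAxis₂.mpr rfl))

lemma joined_of_walk {s t : P} (p : (dualGraph P).Walk s t) {u w : Cell} (hu : u ∈ vertsOf s.1)
    (hw : w ∈ vertsOf t.1) : Joined P u w := by
  induction p generalizing u with
  | nil => exact joined_of_mem_vertsOf (Subtype.mem _) hu hw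
  | cons h _ ih =>
    obtain ⟨-, e, hes, het⟩ := h
    exact (joined_of_mem_vertsOf (Subtype.mem _) hu (ends_subset_vertsOf hes (.inl rfl))).trans
      (ih (ends_subset_vertsOf het (.inl rfl)) hw)

lemma joined_of_mem_vertsOfSet (hconn : (dualGraph P).Connected) {u w : Cell}
    (hu : u ∈ vertsOfSet P) (hw : w ∈ vertsOfSet P) : Joined P u w := by
  obtain ⟨s, hs, hus⟩ := mem_vertsOfSet.mp hu
  obtain ⟨t, ht, hwt⟩ := mem_vertsOfSet.mp hw
  obtain ⟨p⟩ := hconn.preconnected ⟨s, hs⟩ ⟨t, ht⟩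
  exact joined_of_walk p hus hwt

end Joined

lemma ker_sum_le_range_edgeBoundary [Fintype (edgesOfSet P)] [Fintype (vertsOfSet P)]
    (hconn : (dualGraph P).Connected) :
    LinearMap.ker (∑ v : vertsOfSet P, LinearMap.proj (R := ZMod 2) v) ≤
      LinearMap.range (edgeBoundary P).mulVecLin := by
  intro x hx
  have hsum : ∑ v, x v = 0 := by simpa using hx
  rcases isEmpty_or_nonempty (vertsOfSet P) with hV | ⟨⟨v₀⟩⟩
  · rw [Subsingleton.elim x 0]
    exact zero_mem _
  have hx : x = ∑ v, x v • (vertexChain P v.1 + vertexChain P v₀.1) := by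
    simp only [smul_add, Finset.sum_add_distrib, ← Finset.sum_smul, hsum, zero_smul, add_zero]
    convert pi_eq_sum_univ x using 3 with v
    funext w
    simp [vertexChain, Subtype.ext_iff, eq_comm]
  rw [hx]
  exact Submodule.sum_mem _ fun v _ =>
    Submodule.smul_mem _ _ (joined_of_mem_vertsOfSet hconn v.2 v₀.2)

lemma range_faceBoundary_eq_ker_edgeBoundary [Fintype P] [Fintype (edgesOfSet P)]
    [Fintype (vertsOfSet P)] (hsurf : IsGridSurface P)
    (hedge : ∀ e, (∃ s ∈ P, e ∈ edgesOf s) → (facesOf P e).ncard = 2)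
    (heuler : (vertsOfSet P).ncard + P.ncard = (edgesOfSet P).ncard + 2) :
    LinearMap.range (faceBoundary P).mulVecLin = LinearMap.ker (edgeBoundary P).mulVecLin := by
  refine range_eq_ker_of_finrank _ _ ?_ 1 (ker_faceBoundary_le_span_one hsurf.connected hedge) _
    (ker_sum_le_range_edgeBoundary hsurf.connected) ?_
  · rw [← Matrix.mulVecLin_mul, edgeBoundary_mul_faceBoundary, Matrix.mulVecLin_zero]
  · simpa only [Module.finrank_fintype_fun_eq_card, ← Nat.card_eq_fintype_card,
      Nat.card_coe_set_eq] using heuler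

def IsDualCycle (P : Set Sq) (A : Set GridEdge) : Prop := ∀ s ∈ P, Even (A ∩ edgesOf s).ncard

theorem even_ncard_inter_of_isEdgeCycle_of_isDualCycle (hsurf : IsGridSurface P)
    (hedge : ∀ e, (∃ s ∈ P, e ∈ edgesOf s) → (facesOf P e).ncard = 2)
    (heuler : (vertsOfSet P).ncard + P.ncard = (edgesOfSet P).ncard + 2)
    {ρ A : Set GridEdge} (hρP : ρ ⊆ edgesOfSet P) (hρ : IsEdgeCycle ρ) (hA : IsDualCycle P A) :
    Even (A ∩ ρ).ncard := by
  have := hsurf.finite.fintype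
  have := (edgesOfSet_finite hsurf.finite).fintype
  have := (vertsOfSet_finite hsurf.finite).fintype
  obtain ⟨x, hx⟩ : edgeChain P ρ ∈ LinearMap.range (faceBoundary P).mulVecLin := by
    rw [range_faceBoundary_eq_ker_edgeBoundary hsurf hedge heuler]
    exact edgeBoundary_mulVec_edgeChain hρP hρ
  have hA0 : edgeChain P A ᵥ* faceBoundary P = 0 := funext fun s =>
    (edgeChain_dotProduct (Set.inter_subset_right.trans (edgesOf_subset_edgesOfSet s.2))).trans
      (ZMod.natCast_eq_zero_iff_even.mpr (hA s s.2))
  rw [← ZMod.natCast_eq_zero_iff_even, ← edgeChain_dotProduct (Set.inter_subset_right.trans hρP),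
    ← hx, Matrix.mulVecLin_apply, dotProduct_mulVec, hA0, zero_dotProduct]

end Chains

section Bands

variable {P B B₁ B₂ : Set Sq} {a b : Fin 3} {x y : ℤ}

/-- The side of a square `t` of a `b`-band lying in the plane that bounds the slab from below. -/
def rimEdge (b : Fin 3) (t : Sq) : GridEdge := (t.1 + unitVec t.2, thirdIdx t.2 b)

def rungs (a : Fin 3) (B : Set Sq) : Set GridEdge := {e | e.2 = a ∧ ∃ s ∈ B, e ∈ edgesOf s}

lemma rimEdge_mem_edgesOf {t : Sq} (hb : b ≠ t.2) : rimEdge b t ∈ edgesOf t := by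
  obtain ⟨h1, h2⟩ := thirdIdx_ne t.2 b hb
  rw [mem_edgesOf]
  refine ⟨h1, ?_, ?_, Or.inl ?_⟩ <;>
    simp [rimEdge, thirdIdx_thirdIdx t.2 b hb, unitVec_of_ne h1, unitVec_of_ne hb]

lemma rimEdge_injOn : Set.InjOn (rimEdge b) {t | t.2 ≠ b} := by
  intro t ht t' ht' h
  have h2 : t.2 = t'.2 := thirdIdx_left_inj _ _ _ ht ht' (congrArg Prod.snd h)
  have h1 : t.1 + unitVec t.2 = t'.1 + unitVec t'.2 := congrArg Prod.fst h
  rw [h2] at h1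
  exact Prod.ext (add_right_cancel h1) h2

lemma mem_ends_rimEdge {t : Sq} (hb : b ≠ t.2) (v : Cell) :
    v ∈ ends (rimEdge b t) ↔ (v, b) ∈ edgesOf t := by
  obtain ⟨h1, h2⟩ := thirdIdx_ne t.2 b hb
  have hv : ∀ q : Cell, v = q ↔ ∀ m, m = t.2 ∨ m = b ∨ m = thirdIdx t.2 b → v m = q m := by
    intro q
    refine ⟨fun h m _ => h ▸ rfl, fun h => funext fun m => h m ?_⟩
    exact eq_or_eq_or_eq_thirdIdx t.2 b m hb
  simp only [ends, rimEdge, Set.mem_insert_iff, Set.mem_singleton_iff, hv, mem_edgesOf,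
    forall_eq_or_imp, forall_eq, Pi.add_apply, unitVec_self, unitVec_of_ne hb,
    unitVec_of_ne h1, unitVec_of_ne h1.symm, unitVec_of_ne h2.symm]
  omega

lemma IsCompOf.mem_of_mem_facesOf (hB : IsCompOf B (slabSquares P a x)) {s u : Sq}
    {e : GridEdge} (hs : s ∈ B) (he : e ∈ edgesOf s) (hea : e.2 = a) (hu : u ∈ facesOf P e) :
    u ∈ B := by
  by_cases hus : u = s
  · exact hus ▸ hs
  obtain ⟨-, -, hsx⟩ := hB.subset hs
  have hux : u.1 a = x := by
    rw [← hsx, ← hea, ← apply_dir_of_mem_edgesOf hu.2, apply_dir_of_mem_edgesOf he]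
  exact hB.mem_of_edgeAdj hs ⟨hu.1, hea ▸ (ne_normal_of_mem_edgesOf hu.2).symm, hux⟩
    ⟨Ne.symm hus, e, he, hu.2⟩

lemma isDualCycle_rungs (hB : IsCompOf B (slabSquares P a x)) : IsDualCycle P (rungs a B) := by
  intro u hu
  by_cases huB : u ∈ B
  · have : rungs a B ∩ edgesOf u = edgesOf u ∩ {e | e.2 = a} := by
      ext e
      exact ⟨fun ⟨⟨hea, _⟩, he⟩ => ⟨he, hea⟩, fun ⟨he, hea⟩ => ⟨⟨hea, u, huB, he⟩, he⟩⟩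
    rw [this, ncard_edgesOf_inter_dir (hB.subset huB).2.1.symm]
    exact even_two
  · have : rungs a B ∩ edgesOf u = ∅ := Set.eq_empty_of_forall_notMem
      fun e ⟨⟨hea, s, hs, hes⟩, heu⟩ => huB (hB.mem_of_mem_facesOf hs hes hea ⟨hu, heu⟩)
    rw [this, Set.ncard_empty]
    exact Even.zero

lemma image_rimEdge_subset_edgesOfSet (hB : IsCompOf B (slabSquares P b y)) :
    rimEdge b '' B ⊆ edgesOfSet P := by
  rintro _ ⟨t, ht, rfl⟩
  obtain ⟨htP, htb, -⟩ := hB.subset ht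
  exact edgesOf_subset_edgesOfSet htP (rimEdge_mem_edgesOf htb.symm)

lemma isEdgeCycle_image_rimEdge
    (hedge : ∀ e, (∃ s ∈ P, e ∈ edgesOf s) → (facesOf P e).ncard = 2)
    (hB : IsCompOf B (slabSquares P b y)) : IsEdgeCycle (rimEdge b '' B) := by
  intro v
  have hBb : B ⊆ {t | t.2 ≠ b} := fun t ht => (hB.subset ht).2.1
  have himage : edgesAt v ∩ rimEdge b '' B = rimEdge b '' (B ∩ facesOf P (v, b)) := by
    ext e
    constructor
    · rintro ⟨hv, t, ht, rfl⟩
      exact ⟨t, ⟨ht, (hB.subset ht).1, (mem_ends_rimEdge (hBb ht).symm v).mp hv⟩, rfl⟩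
    · rintro ⟨t, ⟨ht, -, hvt⟩, rfl⟩
      exact ⟨(mem_ends_rimEdge (hBb ht).symm v).mpr hvt, t, ht, rfl⟩
  rw [himage, (rimEdge_injOn.mono (Set.inter_subset_left.trans hBb)).ncard_image]
  rcases (B ∩ facesOf P (v, b)).eq_empty_or_nonempty with hempty | ⟨t₀, ht₀B, ht₀⟩
  · rw [hempty, Set.ncard_empty]
    exact Even.zero
  · have : B ∩ facesOf P (v, b) = facesOf P (v, b) :=
      Set.inter_eq_right.mpr fun u hu => hB.mem_of_mem_facesOf ht₀B ht₀.2 rfl hu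
    rw [this, hedge _ ⟨t₀, ht₀⟩]
    exact even_two

lemma rungs_inter_image_rimEdge (hab : a ≠ b) (hB₁ : IsCompOf B₁ (slabSquares P a x))
    (hB₂ : IsCompOf B₂ (slabSquares P b y)) :
    rungs a B₁ ∩ rimEdge b '' B₂ = rimEdge b '' (B₁ ∩ B₂) := by
  ext e
  constructor
  · rintro ⟨⟨hea, s, hs, hes⟩, t, ht, rfl⟩
    obtain ⟨htP, htb, -⟩ := hB₂.subset ht
    exact ⟨t, ⟨hB₁.mem_of_mem_facesOf hs hes hea ⟨htP, rimEdge_mem_edgesOf htb.symm⟩, ht⟩, rfl⟩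
  · rintro ⟨t, ⟨ht₁, ht₂⟩, rfl⟩
    have hta := (hB₁.subset ht₁).2.1
    have htb := (hB₂.subset ht₂).2.1
    exact ⟨⟨(eq_thirdIdx t.2 b a htb.symm hta.symm hab).symm, t, ht₁,
      rimEdge_mem_edgesOf htb.symm⟩, t, ht₂, rfl⟩

lemma axis_ne_of_overlaps (hB₁ : IsCompOf B₁ (slabSquares P a x))
    (hB₂ : IsCompOf B₂ (slabSquares P b y)) (hov : Overlaps B₁ B₂) : a ≠ b := by
  rintro rfl
  obtain ⟨hne, s, hs₁, hs₂⟩ := hov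
  obtain rfl : x = y := (hB₁.subset hs₁).2.2.symm.trans (hB₂.subset hs₂).2.2
  exact hne (hB₁.eq_of_mem hB₂ hs₁ hs₂)

end Bands

/-- Any two overlapping bands of a grid polyhedron overlap in at least
two grid squares. -/
theorem overlapping_bands_share_two_squares (C : Set Cell) (P : Set Sq)
    (hP : IsGridPolyhedron C P) (B₁ B₂ : Set Sq) (hB₁ : IsBand P B₁)
    (hB₂ : IsBand P B₂) (hov : Overlaps B₁ B₂) : 2 ≤ (B₁ ∩ B₂).ncard := by
  obtain ⟨a, x, hB₁⟩ := hB₁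
  obtain ⟨b, y, hB₂⟩ := hB₂
  have heven : Even (B₁ ∩ B₂).ncard := by
    have := even_ncard_inter_of_isEdgeCycle_of_isDualCycle hP.surface hP.edgeTwo hP.euler
      (image_rimEdge_subset_edgesOfSet hB₂) (isEdgeCycle_image_rimEdge hP.edgeTwo hB₂)
      (isDualCycle_rungs hB₁)
    rwa [rungs_inter_image_rimEdge (axis_ne_of_overlaps hB₁ hB₂ hov) hB₁ hB₂,
      (rimEdge_injOn.mono fun t ht => (hB₂.subset ht.2).2.1).ncard_image] at this
  have hpos : (B₁ ∩ B₂).ncard ≠ 0 :=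
    ((Set.ncard_pos (hP.surface.finite.subset fun t ht => (hB₁.subset ht.1).1)).mpr hov.2).ne'
  obtain ⟨k, hk⟩ := heven
  omega

end StripFold
end

section
/- If S is a band cover of a grid polyhedron P and B is a band of P not in S, then every band of P that overlaps B belongs to S. -/
open scoped Classical

namespace StripFold

lemma Fin3.eq_or_eq_of_ne_of_ne (i a b c : Fin 3) (ha : a ≠ i) (hb : b ≠ i) (hc : c ≠ i)
    (hab : a ≠ b) : c = a ∨ c = b := by
  revert i a b c; decide

lemma IsCompOf.subset_of_mem {T B B' : Set Sq} (hB : IsCompOf B T) (hB' : IsCompOf B' T)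
    {g : Sq} (hgB : g ∈ B) (hgB' : g ∈ B') : B ⊆ B' := by
  obtain ⟨-, hBT, hconn, -⟩ := hB
  have walk_stays : ∀ {s t : B}, (dualGraph B).Walk s t → s.1 ∈ B' → t.1 ∈ B' := by
    intro s t w
    induction w with
    | nil => exact id
    | cons hadj _ ih => exact fun hs => ih (hB'.2.2.2 _ hs _ (hBT (Subtype.prop _)) hadj)
  exact fun s hs => walk_stays (hconn ⟨g, hgB⟩ ⟨s, hs⟩).some hgB'

lemma IsCompOf.eq_of_mem_s8 {T B B' : Set Sq} (hB : IsCompOf B T) (hB' : IsCompOf B' T)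
    {g : Sq} (hgB : g ∈ B) (hgB' : g ∈ B') : B = B' :=
  (hB.subset_of_mem hB' hgB hgB').antisymm (hB'.subset_of_mem hB hgB' hgB)

lemma IsBand.subset {P B : Set Sq} (hB : IsBand P B) : B ⊆ P := by
  obtain ⟨_, _, hc⟩ := hB
  exact fun g hg => (hc.2.1 hg).1

lemma eq_of_mem_of_isCompOf_slabSquares {P B B' : Set Sq} {a : Fin 3} {x x' : ℤ}
    (hB : IsCompOf B (slabSquares P a x)) (hB' : IsCompOf B' (slabSquares P a x'))
    {g : Sq} (hgB : g ∈ B) (hgB' : g ∈ B') : B = B' := by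
  obtain rfl : x = x' := (hB.2.1 hgB).2.2.symm.trans (hB'.2.1 hgB').2.2
  exact hB.eq_of_mem_s8 hB' hgB hgB'

/-- A square with normal `eᵢ` lies only in slabs along the two axes other than `i`,
so at most two bands pass through it. -/
lemma IsBand.eq_or_eq_of_mem {P B₁ B₂ B₃ : Set Sq} (h₁ : IsBand P B₁) (h₂ : IsBand P B₂)
    (h₃ : IsBand P B₃) (h₁₂ : B₁ ≠ B₂) {g : Sq} (hg₁ : g ∈ B₁) (hg₂ : g ∈ B₂)
    (hg₃ : g ∈ B₃) : B₃ = B₁ ∨ B₃ = B₂ := by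
  obtain ⟨a₁, x₁, hc₁⟩ := h₁
  obtain ⟨a₂, x₂, hc₂⟩ := h₂
  obtain ⟨a₃, x₃, hc₃⟩ := h₃
  have ha₁₂ : a₁ ≠ a₂ := by
    rintro rfl
    exact h₁₂ (eq_of_mem_of_isCompOf_slabSquares hc₁ hc₂ hg₁ hg₂)
  rcases Fin3.eq_or_eq_of_ne_of_ne g.2 a₁ a₂ a₃ (hc₁.2.1 hg₁).2.1.symm
      (hc₂.2.1 hg₂).2.1.symm (hc₃.2.1 hg₃).2.1.symm ha₁₂ with rfl | rfl
  · exact .inl (eq_of_mem_of_isCompOf_slabSquares hc₃ hc₁ hg₃ hg₁)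
  · exact .inr (eq_of_mem_of_isCompOf_slabSquares hc₃ hc₂ hg₃ hg₂)

theorem overlapping_bands_in_cover_general (P : Set Sq) (S : Set (Set Sq)) (hS : IsBandCover P S)
    (B : Set Sq) (hB : IsBand P B) (hBS : B ∉ S) :
    ∀ B' : Set Sq, IsBand P B' → Overlaps B' B → B' ∈ S := by
  rintro B' hB' ⟨hne, g, hgB', hgB⟩
  obtain ⟨D, hDS, hgD⟩ := hS.2 g (hB.subset hgB)
  rcases IsBand.eq_or_eq_of_mem hB' hB (hS.1 D hDS) hne hgB' hgB hgD with rfl | rfl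
  · exact hDS
  · exact absurd hDS hBS

/-- If `S` is a band cover of a grid polyhedron `P` and `B` is a band of
`P` not in `S`, then every band of `P` that overlaps `B` belongs to `S`. -/
theorem overlapping_bands_in_cover (C : Set Cell) (P : Set Sq)
    (hP : IsGridPolyhedron C P) (S : Set (Set Sq)) (hS : IsBandCover P S)
    (B : Set Sq) (hB : IsBand P B) (hBS : B ∉ S) :
    ∀ B' : Set Sq, IsBand P B' → Overlaps B' B → B' ∈ S :=
  overlapping_bands_in_cover_general P S hS B hB hBS

end StripFold
end
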